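/- arXiv:2303.13406 — 3 statements merged into one kernel-verified Lean document; each statement's English description precedes it below -/
import Mathlib

section
/- Simes' identity under independence: Let p₁,…,p_d be i.i.d. uniform on (0,1) and let p₍₁₎ ≤ … ≤ p₍d₎ be their order statistics. Then P(p₍ᵢ₎ > iα/d for all i = 1,…,d) = 1 − α for every α ∈ [0,1]. -/
/-!
Discretize: with thresholds `tᵢ = (i + 1)α/d`, replace each p-value by the index of the first
threshold it does not exceed, or by `⊤` if it exceeds `α`. These levels are independent, each
finite level has mass `α/d` and `⊤` has mass `1 - α`, and the event only depends on them.
Rotating all finite levels cyclically preserves these weights, and by the cycle lemma exactly as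
many of the `d` rotations of a configuration are admissible as it has entries at `⊤`. Averaging
over the rotations, `d · P(admissible) = E #{j | level j = ⊤} = d (1 - α)`.
-/

open Finset MeasureTheory ProbabilityTheory Fin.NatCast

def IsForwardStrictMin (A : ℕ → ℤ) (d r : ℕ) : Prop := ∀ n ∈ Ioc r (r + d), A r < A n

instance (A : ℕ → ℤ) (d : ℕ) : DecidablePred (IsForwardStrictMin A d) :=
  fun _ => decidableDforallFinset

theorem exists_forall_le_of_map_add_eq {A : ℕ → ℤ} {d k : ℕ} (hd : 0 < d)
    (hper : ∀ n, A (n + d) = A n + k) : ∃ t < d, ∀ n, A t ≤ A n := by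
  obtain ⟨t, ht, hmin⟩ := exists_min_image (range d) A ⟨0, mem_range.2 hd⟩
  refine ⟨t, mem_range.1 ht, fun n => ?_⟩
  induction n using Nat.strong_induction_on with
  | _ n ih =>
    rcases lt_or_ge n d with hn | hn
    · exact hmin n (mem_range.2 hn)
    · have := hper (n - d)
      rw [Nat.sub_add_cancel hn] at this
      linarith [ih (n - d) (by omega)]

theorem card_filter_isForwardStrictMin {A : ℕ → ℤ} {d k : ℕ} (hd : 0 < d)
    (hstep : ∀ n, A (n + 1) ≤ A n + 1) (hper : ∀ n, A (n + d) = A n + k) :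
    #{r ∈ range d | IsForwardStrictMin A d r} = k := by
  obtain ⟨t, ht, hmin⟩ := exists_forall_le_of_map_add_eq hd hper
  have hlate : ∀ n, d ≤ n → A t + k ≤ A n := fun n hn => by
    have := hper (n - d)
    rw [Nat.sub_add_cancel hn] at this
    linarith [hmin (n - d)]
  have hcard : #(Ico (A t) (A t + k)) = k := by simp
  rw [← hcard]
  apply card_nbij A
  · intro r hr
    rw [mem_coe, mem_filter, mem_range] at hr
    obtain ⟨hrd, hr⟩ := hr
    -- the minimum, or its translate by one period, lies in the window after `r`
    have key : A r < A t + k := by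
      rcases le_or_gt t r with htr | htr
      · exact (hr (t + d) (mem_Ioc.2 ⟨by omega, by omega⟩)).trans_eq (hper t)
      · have := hr t (mem_Ioc.2 ⟨htr, by omega⟩)
        linarith [hmin r]
    simpa using ⟨hmin r, key⟩
  · intro r hr r' hr' h
    rw [mem_coe, mem_filter, mem_range] at hr hr'
    by_contra hne
    rcases lt_or_gt_of_ne hne with hlt | hlt
    · exact (hr.2 r' (mem_Ioc.2 ⟨hlt, by omega⟩)).ne h
    · exact (hr'.2 r (mem_Ioc.2 ⟨hlt, by omega⟩)).ne h.symm
  · intro v hv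
    simp only [coe_Ico, Set.mem_Ico] at hv
    have hne : ({n ∈ range d | A n ≤ v}).Nonempty := ⟨t, by simpa [ht] using hv.1⟩
    set r := ({n ∈ range d | A n ≤ v}).max' hne
    have hr : r < d ∧ A r ≤ v := by
      have := max'_mem _ hne
      rwa [mem_filter, mem_range] at this
    have hafter : ∀ n, r < n → v < A n := fun n hrn => by
      by_contra! hn
      rcases lt_or_ge n d with hnd | hnd
      · have := le_max' {n ∈ range d | A n ≤ v} n (mem_filter.2 ⟨mem_range.2 hnd, hn⟩)
        omega
      · linarith [hlate n hnd]
    -- the walk climbs by at most one, so it sits exactly at level `v` when it last visits it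
    have hAr : A r = v := le_antisymm hr.2 (by linarith [hstep r, hafter (r + 1) (by omega)])
    refine ⟨r, ?_, hAr⟩
    rw [mem_coe, mem_filter, mem_range]
    exact ⟨hr.1, fun n hn => hAr ▸ hafter n (mem_Ioc.1 hn).1⟩

theorem Fin.card_filter_univ_eq_card_filter_range (d : ℕ) (P : ℕ → Prop) [DecidablePred P] :
    #{r : Fin d | P r} = #{r ∈ range d | P r} := by
  rw [← card_map Fin.valEmbedding]
  congr 1
  ext n
  simp only [mem_map, mem_filter, mem_univ, true_and, Fin.valEmbedding_apply, mem_range]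
  constructor
  · rintro ⟨a, ha, rfl⟩
    exact ⟨a.isLt, ha⟩
  · rintro ⟨hn, hP⟩
    exact ⟨⟨n, hn⟩, hP, rfl⟩

theorem Fin.sum_Iic_add_eq_sum_range {M : Type*} [AddCommMonoid M] {d : ℕ} [NeZero d]
    (c : Fin d → M) (r i : Fin d) :
    ∑ m ∈ Iic i, c (r + m) = ∑ m ∈ range (i + 1), c (r + m) := by
  rw [Nat.range_succ_eq_Iic, ← Fin.map_valEmbedding_Iic, sum_map]
  simp

theorem Fin.sum_range_add_eq_sum {M : Type*} [AddCommMonoid M] {d : ℕ} [NeZero d]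
    (c : Fin d → M) (r : Fin d) : ∑ m ∈ range d, c (r + m) = ∑ x, c x := by
  rw [← Fin.sum_univ_eq_sum_range (fun m => c (r + m))]
  simpa using Equiv.sum_comp (Equiv.addLeft r) c

/-- The cycle lemma of Dvoretzky and Motzkin. -/
theorem cycle_lemma {d : ℕ} [NeZero d] (c : Fin d → ℕ) (hc : ∑ m, c m ≤ d) :
    #{r : Fin d | ∀ i : Fin d, ∑ m ∈ Iic i, c (r + m) ≤ i} + ∑ m, c m = d := by
  set A : ℕ → ℤ := fun n => n - ∑ m ∈ range n, (c m : ℤ) with hAdef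
  have hA : ∀ n j, A (n + j) = A n + j - ∑ m ∈ range j, (c (n + m) : ℤ) :=
    fun n j => by simp only [hAdef, sum_range_add]; push_cast; ring
  have hstep : ∀ n, A (n + 1) ≤ A n + 1 := fun n => by simp [hA n 1]
  have hper : ∀ n, A (n + d) = A n + ↑(d - ∑ m, c m) := fun n => by
    rw [hA n d, Nat.cast_sub hc, Fin.sum_range_add_eq_sum (fun x => (c x : ℤ))]
    push_cast
    ring
  have hwindow : ∀ r i : Fin d,
      ∑ m ∈ Iic i, c (r + m) ≤ i ↔ A r < A (r + (i + 1)) := fun r i => by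
    rw [hA, ← Nat.cast_le (α := ℤ), Nat.cast_sum,
      Fin.sum_Iic_add_eq_sum_range (fun x => (c x : ℤ)), Fin.cast_val_eq_self]
    push_cast
    omega
  have hgood : ∀ r : Fin d,
      (∀ i : Fin d, ∑ m ∈ Iic i, c (r + m) ≤ i) ↔ IsForwardStrictMin A d r := fun r => by
    simp only [hwindow, IsForwardStrictMin, mem_Ioc]
    constructor
    · intro h n hn
      have := h ⟨n - r - 1, by omega⟩
      rwa [show (r : ℕ) + (n - r - 1 + 1) = n by omega] at this
    · intro h i
      exact h _ ⟨by omega, by omega⟩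
  simp_rw [hgood]
  rw [Fin.card_filter_univ_eq_card_filter_range d (IsForwardStrictMin A d),
    card_filter_isForwardStrictMin (Nat.pos_of_neZero d) hstep hper]
  omega

section Levels

variable {ι : Type*} [Fintype ι] {d : ℕ}

theorem card_filter_mem_map_coeWithTop {α : Type*} [DecidableEq α] (v : ι → WithTop α)
    (s : Finset α) :
    #{j | v j ∈ s.map Function.Embedding.coeWithTop} = ∑ m ∈ s, #{j | v j = ↑m} := by
  rw [card_eq_sum_card_fiberwise (s := {j | v j ∈ s.map Function.Embedding.coeWithTop})
    (f := v) (t := s.map Function.Embedding.coeWithTop) fun j hj => (mem_filter.1 hj).2, sum_map]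
  simp only [filter_filter]
  refine sum_congr rfl fun m hm => congrArg card (filter_congr fun j _ => ?_)
  exact and_iff_right_of_imp fun h => h ▸ mem_map_of_mem _ hm

theorem card_filter_le_coe_eq_sum (w : ι → WithTop (Fin d)) (i : Fin d) :
    #{j | w j ≤ ↑i} = ∑ m ∈ Iic i, #{j | w j = ↑m} := by
  rw [← card_filter_mem_map_coeWithTop]
  refine congrArg card (filter_congr fun j _ => ?_)
  cases w j <;> simp

theorem sum_card_filter_eq_coe_add_card_filter_eq_top (v : ι → WithTop (Fin d)) :
    ∑ m : Fin d, #{j | v j = ↑m} + #{j | v j = ⊤} = Fintype.card ι := by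
  rw [← card_filter_mem_map_coeWithTop, ← card_univ,
    ← card_filter_add_card_filter_not (s := univ) (fun j => v j ≠ ⊤)]
  congr 2
  · refine filter_congr fun j _ => ?_
    cases v j <;> simp
  · simp

def IsSimesAdmissible (v : ι → WithTop (Fin d)) : Prop := ∀ i : Fin d, #{j | v j ≤ ↑i} ≤ i

instance : DecidablePred (IsSimesAdmissible (ι := ι) (d := d)) :=
  fun _ => Fintype.decidableForallFintype

theorem card_filter_isSimesAdmissible_map_sub [NeZero d] (hι : Fintype.card ι = d)
    (v : ι → WithTop (Fin d)) :
    #{r : Fin d | IsSimesAdmissible (WithTop.map (· - r) ∘ v)} = #{j | v j = ⊤} := by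
  have hrot : ∀ r i : Fin d, #{j | WithTop.map (· - r) (v j) ≤ ↑i}
      = ∑ m ∈ Iic i, #{j | v j = ↑(r + m)} := fun r i => by
    rw [card_filter_le_coe_eq_sum]
    refine sum_congr rfl fun m _ => congrArg card (filter_congr fun j _ => ?_)
    cases v j with
    | top => simp only [WithTop.map_top, WithTop.top_ne_coe]
    | coe a => simp only [WithTop.map_coe, WithTop.coe_eq_coe, sub_eq_iff_eq_add']
  have hsum := sum_card_filter_eq_coe_add_card_filter_eq_top v
  have hcycle := cycle_lemma (fun m : Fin d => #{j | v j = ↑m}) (by omega)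
  simp only [IsSimesAdmissible, Function.comp_apply, hrot]
  omega

theorem Fintype.sum_filter_apply_eq_prod {ι β R : Type*} [Fintype ι] [DecidableEq ι] [Fintype β]
    [DecidableEq β] [CommSemiring R] (f : β → R) (hf : ∑ x, f x = 1) (j : ι) (x₀ : β) :
    ∑ v : ι → β with v j = x₀, ∏ l, f (v l) = f x₀ := by
  set g : ι → β → R := fun l x => if l = j ∧ x ≠ x₀ then 0 else f x
  have hg : ∀ v : ι → β, (if v j = x₀ then ∏ l, f (v l) else 0) = ∏ l, g l (v l) := fun v => by
    by_cases hv : v j = x₀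
    · simp only [hv, if_true]
      refine Finset.prod_congr rfl fun l _ => ?_
      by_cases hl : l = j
      · subst hl; simp [g, hv]
      · simp [g, hl]
    · simp only [hv, if_false]
      exact (prod_eq_zero (mem_univ j) (by simp [g, hv])).symm
  have hsum : ∀ l, ∑ x, g l x = if l = j then f x₀ else 1 := fun l => by
    by_cases hl : l = j
    · simp [g, hl]
    · simp [g, hl, hf]
  rw [sum_filter, Fintype.sum_congr _ _ hg, ← Fintype.prod_sum, Fintype.prod_congr _ _ hsum]
  simp

theorem sum_prod_isSimesAdmissible [DecidableEq ι] [NeZero d] {K : Type*} [Field K] [CharZero K]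
    (hι : Fintype.card ι = d) (a b : K) (hab : d * a + b = 1) :
    ∑ v : ι → WithTop (Fin d) with IsSimesAdmissible v, ∏ j, (if v j = ⊤ then b else a) = b := by
  set w : WithTop (Fin d) → K := fun x => if x = ⊤ then b else a
  set T := ∑ v : ι → WithTop (Fin d) with IsSimesAdmissible v, ∏ j, w (v j) with hT
  have hw : ∑ x, w x = 1 := by
    rw [show ∑ x, w x = w ⊤ + ∑ m : Fin d, w m from Fintype.sum_option w]
    simp [w, ← hab, add_comm]
  -- rotating every level by `r` is a weight-preserving bijection of the configurations
  have hrot : ∀ r : Fin d,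
      ∑ v : ι → WithTop (Fin d) with IsSimesAdmissible (WithTop.map (· - r) ∘ v),
        ∏ j, w (v j) = T := fun r => by
    have hinj : Function.Injective (WithTop.map (· - r) : WithTop (Fin d) → WithTop (Fin d)) :=
      WithTop.map_injective (sub_left_injective)
    rw [hT, sum_filter, sum_filter]
    refine Fintype.sum_bijective _ (Finite.injective_iff_bijective.1 hinj.comp_left) _ _
      fun v => ?_
    simp [w, WithTop.map_eq_top_iff]
  have hdouble : (d : K) * T = ∑ v : ι → WithTop (Fin d), #{j | v j = ⊤} * ∏ j, w (v j) := by
    calc (d : K) * T = ∑ r : Fin d, ∑ v : ι → WithTop (Fin d),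
          if IsSimesAdmissible (WithTop.map (· - r) ∘ v) then ∏ j, w (v j) else 0 := by
          simp_rw [← sum_filter, hrot]; simp
      _ = _ := by
          rw [sum_comm]
          refine Fintype.sum_congr _ _ fun v => ?_
          rw [← card_filter_isSimesAdmissible_map_sub hι v, natCast_card_filter, sum_mul]
          simp
  have htop : ∑ v : ι → WithTop (Fin d), (#{j | v j = ⊤} : K) * ∏ j, w (v j) = d * b := by
    simp_rw [natCast_card_filter, sum_mul, ite_mul, one_mul, zero_mul]
    rw [sum_comm]
    simp_rw [← sum_filter, Fintype.sum_filter_apply_eq_prod w hw]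
    simp [w, hι]
  exact mul_left_cancel₀ (Nat.cast_ne_zero.2 (NeZero.ne d)) (hdouble.trans htop)

end Levels

theorem WithTop.eq_coe_iff_le_and_forall_lt {α : Type*} [LinearOrder α] {b : WithTop α} {m : α} :
    b = ↑m ↔ b ≤ ↑m ∧ ∀ i < m, ¬ b ≤ ↑i := by
  cases b with
  | top => simp
  | coe c =>
    simp only [WithTop.coe_eq_coe, WithTop.coe_le_coe, not_le]
    exact ⟨fun h => h ▸ ⟨le_rfl, fun _ => id⟩,
      fun ⟨h, hlt⟩ => h.antisymm (not_lt.1 fun hc => (hlt c hc).false)⟩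

section ThresholdIndex

variable {d : ℕ} {t : Fin d → ℝ}

noncomputable def thresholdIndex (t : Fin d → ℝ) (x : ℝ) : WithTop (Fin d) :=
  ({i | x ≤ t i} : Finset (Fin d)).min

theorem thresholdIndex_le_coe_iff (ht : Monotone t) {x : ℝ} {i : Fin d} :
    thresholdIndex t x ≤ ↑i ↔ x ≤ t i := by
  refine ⟨fun h => ?_, fun h => min_le (mem_filter.2 ⟨mem_univ _, h⟩)⟩
  obtain ⟨m, hm, hmi⟩ := WithTop.le_coe_iff.1 h
  exact (mem_filter.1 (mem_of_min hm)).2.trans (ht hmi)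

theorem thresholdIndex_eq_top_iff {x : ℝ} : thresholdIndex t x = ⊤ ↔ ∀ i, t i < x := by
  simp [thresholdIndex, Finset.min_eq_top, filter_eq_empty_iff]

theorem thresholdIndex_eq_coe_iff (ht : Monotone t) {x : ℝ} {m : Fin d} :
    thresholdIndex t x = ↑m ↔ x ≤ t m ∧ ∀ i < m, t i < x := by
  simp [WithTop.eq_coe_iff_le_and_forall_lt, thresholdIndex_le_coe_iff ht]

theorem monotone_thresholdIndex : Monotone (thresholdIndex t) := fun _ _ hxy =>
  min_mono fun _ hi => mem_filter.2 ⟨mem_univ _, hxy.trans (mem_filter.1 hi).2⟩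

theorem measurableSet_thresholdIndex_preimage (v : WithTop (Fin d)) :
    MeasurableSet (thresholdIndex t ⁻¹' {v}) :=
  (Set.ordConnected_singleton.preimage_mono monotone_thresholdIndex).measurableSet

theorem thresholdIndex_preimage_top {n : ℕ} {t : Fin (n + 1) → ℝ} (ht : Monotone t) :
    thresholdIndex t ⁻¹' {⊤} = Set.Ioi (t (Fin.last n)) := by
  ext x
  simp only [Set.mem_preimage, Set.mem_singleton_iff, thresholdIndex_eq_top_iff, Set.mem_Ioi]
  exact ⟨fun h => h _, fun h i => (ht (Fin.le_last i)).trans_lt h⟩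

theorem thresholdIndex_preimage_zero {n : ℕ} {t : Fin (n + 1) → ℝ} (ht : Monotone t) :
    thresholdIndex t ⁻¹' {↑(0 : Fin (n + 1))} = Set.Iic (t 0) := by
  ext x
  simp only [Set.mem_preimage, Set.mem_singleton_iff, thresholdIndex_eq_coe_iff ht]
  simp

theorem thresholdIndex_preimage_succ {n : ℕ} {t : Fin (n + 1) → ℝ} (ht : Monotone t)
    (k : Fin n) :
    thresholdIndex t ⁻¹' {↑k.succ} = Set.Ioc (t k.castSucc) (t k.succ) := by
  ext x
  simp only [Set.mem_preimage, Set.mem_singleton_iff, thresholdIndex_eq_coe_iff ht, Set.mem_Ioc,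
    and_comm (a := x ≤ _)]
  refine and_congr_left fun _ => ⟨fun h => h _ k.castSucc_lt_succ, fun h i hi => ?_⟩
  exact (ht (Fin.le_castSucc_iff.2 hi)).trans_lt h

end ThresholdIndex

noncomputable def simesThreshold (d : ℕ) (α : ℝ) (i : Fin d) : ℝ := ((i : ℕ) + 1) * α / d

section SimesThreshold

variable {α : ℝ}

theorem monotone_simesThreshold (d : ℕ) (hα : 0 ≤ α) : Monotone (simesThreshold d α) :=
  fun i j hij => by
    unfold simesThreshold
    gcongr
    exact_mod_cast hij

theorem simesThreshold_nonneg {d : ℕ} (hα : 0 ≤ α) (i : Fin d) : 0 ≤ simesThreshold d α i := by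
  unfold simesThreshold
  positivity

theorem simesThreshold_le {d : ℕ} (hα : 0 ≤ α) (i : Fin d) : simesThreshold d α i ≤ α := by
  have hd : (0 : ℝ) < d := Nat.cast_pos.2 (Nat.zero_lt_of_lt i.isLt)
  have hi : ((i : ℕ) : ℝ) + 1 ≤ d := by exact_mod_cast i.isLt
  rw [simesThreshold, div_le_iff₀ hd]
  nlinarith

variable {n : ℕ}

theorem simesThreshold_zero : simesThreshold (n + 1) α 0 = α / (n + 1 : ℕ) := by
  simp [simesThreshold]

theorem simesThreshold_last : simesThreshold (n + 1) α (Fin.last n) = α := by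
  rw [simesThreshold, Fin.val_last, ← Nat.cast_succ]
  field_simp

theorem simesThreshold_succ_sub_castSucc (k : Fin n) :
    simesThreshold (n + 1) α k.succ - simesThreshold (n + 1) α k.castSucc = α / (n + 1 : ℕ) := by
  simp only [simesThreshold, Fin.val_succ, Fin.val_castSucc]
  push_cast
  ring

end SimesThreshold

section Uniform

variable {Ω : Type*} [MeasurableSpace Ω] {μ : Measure Ω} {X : Ω → ℝ}

theorem measure_le_eq_of_uniform
    (hunif : ∀ x : ℝ, μ {ω | X ω ≤ x} = ENNReal.ofReal (min (max x 0) 1)) {a : ℝ}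
    (ha : 0 ≤ a) (ha1 : a ≤ 1) : μ (X ⁻¹' Set.Iic a) = ENNReal.ofReal a :=
  (hunif a).trans (by rw [max_eq_left ha, min_eq_left ha1])

theorem measure_Ioc_eq_of_uniform [IsFiniteMeasure μ] (hX : Measurable X)
    (hunif : ∀ x : ℝ, μ {ω | X ω ≤ x} = ENNReal.ofReal (min (max x 0) 1)) {a b : ℝ}
    (ha : 0 ≤ a) (hab : a ≤ b) (hb : b ≤ 1) : μ (X ⁻¹' Set.Ioc a b) = ENNReal.ofReal (b - a) := by
  rw [← Set.Iic_sdiff_Iic, Set.preimage_sdiff,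
    measure_sdiff (Set.preimage_mono (Set.Iic_subset_Iic.2 hab))
      (hX measurableSet_Iic).nullMeasurableSet (measure_ne_top μ _),
    measure_le_eq_of_uniform hunif ha (hab.trans hb),
    measure_le_eq_of_uniform hunif (ha.trans hab) hb, ENNReal.ofReal_sub _ ha]

theorem measure_Ioi_eq_of_uniform [IsProbabilityMeasure μ] (hX : Measurable X)
    (hunif : ∀ x : ℝ, μ {ω | X ω ≤ x} = ENNReal.ofReal (min (max x 0) 1)) {a : ℝ}
    (ha : 0 ≤ a) (ha1 : a ≤ 1) : μ (X ⁻¹' Set.Ioi a) = ENNReal.ofReal (1 - a) := by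
  rw [← Set.compl_Iic, Set.preimage_compl, prob_compl_eq_one_sub (hX measurableSet_Iic),
    measure_le_eq_of_uniform hunif ha ha1, ENNReal.ofReal_sub _ ha, ENNReal.ofReal_one]

theorem measure_thresholdIndex_simesThreshold [IsProbabilityMeasure μ] {n : ℕ}
    (hX : Measurable X)
    (hunif : ∀ x : ℝ, μ {ω | X ω ≤ x} = ENNReal.ofReal (min (max x 0) 1)) {α : ℝ}
    (hα0 : 0 ≤ α) (hα1 : α ≤ 1) (v : WithTop (Fin (n + 1))) :
    μ (X ⁻¹' (thresholdIndex (simesThreshold (n + 1) α) ⁻¹' {v}))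
      = ENNReal.ofReal (if v = ⊤ then 1 - α else α / (n + 1 : ℕ)) := by
  have ht := monotone_simesThreshold (n + 1) hα0
  have hle : ∀ i, simesThreshold (n + 1) α i ≤ 1 := fun i => (simesThreshold_le hα0 i).trans hα1
  cases v with
  | top =>
    rw [thresholdIndex_preimage_top ht, simesThreshold_last,
      measure_Ioi_eq_of_uniform hX hunif hα0 hα1, if_pos rfl]
  | coe m =>
    rw [if_neg WithTop.coe_ne_top]
    cases m using Fin.cases with
    | zero =>
      rw [thresholdIndex_preimage_zero ht,
        measure_le_eq_of_uniform hunif (simesThreshold_nonneg hα0 0) (hle 0), simesThreshold_zero]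
    | succ k =>
      rw [thresholdIndex_preimage_succ ht, measure_Ioc_eq_of_uniform hX hunif
        (simesThreshold_nonneg hα0 _) (ht k.castSucc_lt_succ.le) (hle _),
        simesThreshold_succ_sub_castSucc]

end Uniform

theorem measure_setOf_comp_mem_eq_sum_prod {Ω ι E β : Type*} [MeasurableSpace Ω]
    [MeasurableSpace E] [Fintype ι] {μ : Measure Ω} {X : ι → Ω → E} (hXm : ∀ j, Measurable (X j))
    (hX : iIndepFun X μ) (f : E → β) (hf : ∀ b, MeasurableSet (f ⁻¹' {b})) (S : Finset (ι → β)) :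
    μ {ω | (fun j => f (X j ω)) ∈ S} = ∑ v ∈ S, ∏ j, μ (X j ⁻¹' (f ⁻¹' {v j})) := by
  have hset : {ω | (fun j => f (X j ω)) ∈ S} = ⋃ v ∈ S, ⋂ j, X j ⁻¹' (f ⁻¹' {v j}) := by
    ext ω
    simp only [Set.mem_ofPred_eq, Set.mem_iUnion, Set.mem_iInter, Set.mem_preimage,
      Set.mem_singleton_iff, exists_prop]
    exact ⟨fun h => ⟨_, h, fun _ => rfl⟩, fun ⟨v, hv, h⟩ => funext h ▸ hv⟩
  rw [hset, measure_biUnion_finset]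
  · exact sum_congr rfl fun v _ => hX.meas_iInter fun j => ⟨_, hf (v j), rfl⟩
  · intro v _ v' _ hne
    refine Set.disjoint_left.2 fun ω hω hω' => hne (funext fun j => ?_)
    simp only [Set.mem_iInter, Set.mem_preimage, Set.mem_singleton_iff] at hω hω'
    rw [← hω j, hω' j]
  · exact fun v _ => MeasurableSet.iInter fun j => hXm j (hf (v j))

/-- The event `p₍ᵢ₎ > c` is expressed by counting: fewer than `i` of the p-values are `≤ c`. -/
theorem simes_identity_indep
    {Ω : Type*} [MeasurableSpace Ω] (μ : Measure Ω) [IsProbabilityMeasure μ]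
    (d : ℕ) (hd : 1 ≤ d) (p : Fin d → Ω → ℝ) (hmeas : ∀ i, Measurable (p i))
    (hindep : iIndepFun p μ)
    (hunif : ∀ i, ∀ x : ℝ,
      μ {ω | p i ω ≤ x} = ENNReal.ofReal (min (max x 0) 1))
    (α : ℝ) (hα : α ∈ Set.Icc (0 : ℝ) 1) :
    μ {ω | ∀ i : Fin d,
        ((Finset.univ.filter fun j => p j ω ≤ ((i : ℕ) + 1) * α / d).card ≤ (i : ℕ))}
      = ENNReal.ofReal (1 - α) := by
  obtain ⟨n, rfl⟩ : ∃ n, d = n + 1 := ⟨d - 1, by omega⟩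
  obtain ⟨hα0, hα1⟩ := hα
  have hevent : {ω | ∀ i : Fin (n + 1),
      ((Finset.univ.filter fun j => p j ω ≤ ((i : ℕ) + 1) * α / (n + 1 : ℕ)).card ≤ (i : ℕ))}
      = {ω | (fun j => thresholdIndex (simesThreshold (n + 1) α) (p j ω))
          ∈ ({v | IsSimesAdmissible v} : Finset _)} := by
    ext ω
    rw [Set.mem_ofPred_eq, Set.mem_ofPred_eq, mem_filter_univ, IsSimesAdmissible]
    simp only [thresholdIndex_le_coe_iff (monotone_simesThreshold (n + 1) hα0)]
    rfl
  rw [hevent,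
    measure_setOf_comp_mem_eq_sum_prod hmeas hindep _ measurableSet_thresholdIndex_preimage]
  simp_rw [measure_thresholdIndex_simesThreshold (hmeas _) (hunif _) hα0 hα1]
  have hweight : ∀ x : WithTop (Fin (n + 1)), 0 ≤ if x = ⊤ then 1 - α else α / (n + 1 : ℕ) :=
    fun x => by split_ifs <;> [linarith; positivity]
  rw [← Finset.sum_congr rfl fun v _ => ENNReal.ofReal_prod_of_nonneg fun j _ => hweight (v j),
    ← ENNReal.ofReal_sum_of_nonneg fun v _ => prod_nonneg fun j _ => hweight (v j),
    sum_prod_isSimesAdmissible (Fintype.card_fin _) _ _ (by field_simp; ring)]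
end

section
/- FWER control of Holm's procedure: Let p₁,…,p_d be p-values and let T ⊆ {1,…,d} be the index set of true hypotheses with |T| = t ≥ 1, where P(pᵢ ≤ u) ≤ u for each i ∈ T and all u ∈ [0,1]. Then the probability that Holm's step-down procedure (thresholds α/(d−j+1) on ordered p-values, stopping at first failure) rejects at least one true hypothesis is at most α. -/
open MeasureTheory Real Finset

/-! A true hypothesis `i ∈ T` can only be rejected if the Bonferroni test of the intersection
hypothesis `T` itself rejects, i.e. if some `p j` with `j ∈ T` is at most `α / |T|`. By the
union bound and superuniformity this happens with probability at most `|T| · α / |T| = α`. -/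

theorem measure_exists_le_div_card_le {Ω ι : Type*} [MeasurableSpace Ω] (μ : Measure Ω)
    (p : ι → Ω → ℝ) (T : Finset ι)
    (hsuper : ∀ i ∈ T, ∀ u ∈ Set.Icc (0 : ℝ) 1, μ {ω | p i ω ≤ u} ≤ ENNReal.ofReal u)
    {α : ℝ} (hα₀ : 0 ≤ α) (hα₁ : α ≤ #T) :
    μ {ω | ∃ j ∈ T, p j ω ≤ α / #T} ≤ ENNReal.ofReal α := by
  rcases T.eq_empty_or_nonempty with rfl | hT
  · simp
  have hcard : (0 : ℝ) < #T := by exact_mod_cast hT.card_pos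
  have hu : α / #T ∈ Set.Icc (0 : ℝ) 1 :=
    ⟨div_nonneg hα₀ hcard.le, (div_le_one hcard).2 hα₁⟩
  have hunion : {ω | ∃ j ∈ T, p j ω ≤ α / #T} = ⋃ j ∈ T, {ω | p j ω ≤ α / #T} := by
    ext ω; simp
  calc μ {ω | ∃ j ∈ T, p j ω ≤ α / #T}
      ≤ ∑ j ∈ T, μ {ω | p j ω ≤ α / #T} := hunion ▸ measure_biUnion_finset_le T _
    _ ≤ ∑ _j ∈ T, ENNReal.ofReal (α / #T) := sum_le_sum fun j hj => hsuper j hj _ hu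
    _ = ENNReal.ofReal (#T * (α / #T)) := by
        rw [sum_const, nsmul_eq_mul, ENNReal.ofReal_mul (Nat.cast_nonneg _),
          ENNReal.ofReal_natCast]
    _ = ENNReal.ofReal α := by rw [mul_div_cancel₀ _ hcard.ne']

theorem holm_fwer_control_general
    {Ω : Type*} [MeasurableSpace Ω] (μ : Measure Ω)
    (d : ℕ) (p : Fin d → Ω → ℝ)
    (T : Finset (Fin d))
    (hsuper : ∀ i ∈ T, ∀ u ∈ Set.Icc (0 : ℝ) 1,
      μ {ω | p i ω ≤ u} ≤ ENNReal.ofReal u)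
    (α : ℝ) (hα : α ∈ Set.Icc (0 : ℝ) 1) :
    μ {ω | ∃ i ∈ T, ∀ I : Finset (Fin d), i ∈ I →
        ∃ j ∈ I, p j ω ≤ α / I.card} ≤ ENNReal.ofReal α := by
  rcases T.eq_empty_or_nonempty with rfl | hT
  · simp
  have hα_le_card : α ≤ #T := hα.2.trans (by exact_mod_cast hT.card_pos)
  calc μ {ω | ∃ i ∈ T, ∀ I : Finset (Fin d), i ∈ I → ∃ j ∈ I, p j ω ≤ α / I.card}
      ≤ μ {ω | ∃ j ∈ T, p j ω ≤ α / #T} := measure_mono fun ω ⟨i, hi, hrej⟩ => hrej T hi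
    _ ≤ ENNReal.ofReal α := measure_exists_le_div_card_le μ p T hsuper hα.1 hα_le_card

/-- FWER control of Holm's step-down procedure. Holm's procedure is the closed
testing procedure based on Bonferroni local tests: hypothesis `i` is rejected
iff every subset `I` containing `i` has some p-value `≤ α/|I|`. If the
p-values of the true hypotheses `T` (with `|T| ≥ 1`) are superuniform, the
probability of rejecting at least one true hypothesis is at most `α`. -/
theorem holm_fwer_control
    {Ω : Type*} [MeasurableSpace Ω] (μ : Measure Ω) [IsProbabilityMeasure μ]
    (d : ℕ) (p : Fin d → Ω → ℝ)
    (T : Finset (Fin d)) (hT : T.Nonempty)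
    (hsuper : ∀ i ∈ T, ∀ u ∈ Set.Icc (0 : ℝ) 1,
      μ {ω | p i ω ≤ u} ≤ ENNReal.ofReal u)
    (α : ℝ) (hα : α ∈ Set.Icc (0 : ℝ) 1) :
    μ {ω | ∃ i ∈ T, ∀ I : Finset (Fin d), i ∈ I →
        ∃ j ∈ I, p j ω ≤ α / I.card} ≤ ENNReal.ofReal α :=
  holm_fwer_control_general μ d p T hsuper α hα
end

section
/- Sequential rejection principle (fixed-threshold case): Suppose for each subset R of hypotheses a successor set N(R) is defined, satisfying monotonicity (R ⊆ R' implies N(R) ⊆ N(R') ∪ R') almost surely, and the single-step condition: on the event that no false rejection has yet occurred, P(N(F) ⊆ F) ≥ 1 − α where F is the set of false hypotheses. Then the final rejection set R^(∞) obtained by iterating R^(s+1) = R^(s) ∪ N(R^(s)) from R^(0) = ∅ satisfies P(R^(∞) ⊆ F) ≥ 1 − α. -/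
/-! On the event `N(F) ⊆ F`, monotonicity gives `N(R) ⊆ N(F) ∪ F ⊆ F` for every `R ⊆ F`, so the
iteration started at `∅` never leaves `F`; the final rejection event therefore contains the
single-step event. -/

open MeasureTheory

/-- The iteration of the sequential rejection procedure:
`R⁽⁰⁾ = ∅` and `R⁽ˢ⁺¹⁾ = R⁽ˢ⁾ ∪ N(R⁽ˢ⁾)`. -/
def seqRejIter {Ω H : Type*} [DecidableEq H]
    (N : Finset H → Ω → Finset H) : ℕ → Ω → Finset H
  | 0 => fun _ => ∅
  | s + 1 => fun ω => seqRejIter N s ω ∪ N (seqRejIter N s ω) ω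

theorem seqRejIter_subset_of_forall_subset {Ω H : Type*} [DecidableEq H]
    {N : Finset H → Ω → Finset H} {F : Finset H} {ω : Ω}
    (hN : ∀ R ⊆ F, N R ω ⊆ F) : ∀ s, seqRejIter N s ω ⊆ F
  | 0 => Finset.empty_subset F
  | s + 1 =>
    have ih := seqRejIter_subset_of_forall_subset hN s
    Finset.union_subset ih (hN _ ih)

theorem sequential_rejection_principle_general
    {Ω H : Type*} [MeasurableSpace Ω] [Fintype H] [DecidableEq H]
    (μ : Measure Ω)
    (N : Finset H → Ω → Finset H) (F : Finset H)
    (α : ℝ)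
    (hmono : ∀ ω, ∀ R R' : Finset H, R ⊆ R' → N R ω ⊆ N R' ω ∪ R')
    (hsingle : ENNReal.ofReal (1 - α) ≤ μ {ω | N F ω ⊆ F}) :
    ENNReal.ofReal (1 - α) ≤ μ {ω | seqRejIter N (Fintype.card H) ω ⊆ F} := by
  refine hsingle.trans (measure_mono fun ω (hω : N F ω ⊆ F) => ?_)
  have hN : ∀ R ⊆ F, N R ω ⊆ F := fun R hR =>
    (hmono ω R F hR).trans (Finset.union_subset hω subset_rfl)
  exact seqRejIter_subset_of_forall_subset hN _

/-- Goeman–Solari sequential rejection principle (fixed-threshold case): if the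
successor function `N` is monotone (`R ⊆ R'` implies `N(R) ⊆ N(R') ∪ R'`,
almost surely, here pointwise) and satisfies the single-step condition
`P(N(F) ⊆ F) ≥ 1 − α` for the set `F` of false hypotheses, then the final
rejection set (after `|H|` iterations the procedure has stabilized) satisfies
`P(R⁽^∞⁾ ⊆ F) ≥ 1 − α`. -/
theorem sequential_rejection_principle
    {Ω H : Type*} [MeasurableSpace Ω] [Fintype H] [DecidableEq H]
    (μ : Measure Ω) [IsProbabilityMeasure μ]
    (N : Finset H → Ω → Finset H) (F : Finset H)
    (α : ℝ) (hα : α ∈ Set.Icc (0 : ℝ) 1)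
    (hmono : ∀ ω, ∀ R R' : Finset H, R ⊆ R' → N R ω ⊆ N R' ω ∪ R')
    (hsingle : ENNReal.ofReal (1 - α) ≤ μ {ω | N F ω ⊆ F}) :
    ENNReal.ofReal (1 - α) ≤ μ {ω | seqRejIter N (Fintype.card H) ω ⊆ F} :=
  sequential_rejection_principle_general μ N F α hmono hsingle
end
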